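/- arXiv:2411.00757 — 2 statements merged into one kernel-verified Lean document; each statement's English description precedes it below -/
import Mathlib

section
/- Let K ⊆ ℂⁿ be compact, Z ⊆ ℂⁿ a Lebesgue null set, and ψ : (ℂⁿ \ Z) × ℂˡ → ℂ a measurable function supported in K × ℂˡ, bounded on (ℂⁿ \ Z) × K' for every bounded K' ⊆ ℂˡ, and such that ψ(z, −) is holomorphic for each z and each partial derivative ∂ψ/∂xₖ also satisfies the boundedness condition. Let f₁, …, f_r ∈ ℂ[z₁,…,z_n] be nonconstant polynomials. Then the function L_ψ(a, x) := ∫_{ℂⁿ} ∏ᵢ |fᵢ(z)|^{2aᵢ} ψ(z, x) dz is holomorphic on 𝕌ʳ × ℂˡ, where 𝕌 = {s ∈ ℂ : Re s > 0}. -/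
/-!
Off the null set `Z` the integrand is holomorphic in `(a, x)` on `𝕌ʳ × ℂˡ`: for `c ≥ 0` the map
`a ↦ c ^ (2 a)` is entire if `c > 0` and vanishes on `𝕌` if `c = 0`. Near any parameter it is
bounded by a constant multiple of the indicator of `K`, because
`|c ^ (2 a)| ≤ max 1 (sup_K |fᵢ|) ^ (2 Re a)`. By the Cauchy estimates (in the form of the Schwarz
lemma) such a bound also controls the derivative on a smaller neighbourhood, so the integral can be
differentiated under the integral sign.
-/

open MeasureTheory Filter Metric Topology

section ParametricIntegral

variable {α : Type*} [MeasurableSpace α] {μ : Measure α} {𝕜 : Type*} [RCLike 𝕜]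
  {E G : Type*} [NormedAddCommGroup E] [NormedAddCommGroup G]

theorem ContinuousLinearMap.eq_sum_smulRight_basis [NormedSpace 𝕜 E] [FiniteDimensional 𝕜 E]
    [NormedSpace 𝕜 G] {ι : Type*} [Fintype ι] (b : Module.Basis ι 𝕜 E) (D : E →L[𝕜] G) :
    D = ∑ i, ((proj i).comp b.equivFunL.toContinuousLinearMap).smulRight (D (b i)) := by
  ext x
  have hx : D x = ∑ i, b.repr x i • D (b i) := by
    conv_lhs => rw [← b.sum_repr x]
    simp only [map_sum, map_smul]
  simpa using hx

theorem aestronglyMeasurable_fderiv_with_param [NormedSpace 𝕜 E] [FiniteDimensional 𝕜 E]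
    [NormedSpace 𝕜 G] {F : E → α → G} (hF : ∀ p, AEStronglyMeasurable (F p) μ) {p₀ : E}
    (hdiff : ∀ᵐ z ∂μ, DifferentiableAt 𝕜 (F · z) p₀) :
    AEStronglyMeasurable (fun z ↦ fderiv 𝕜 (F · z) p₀) μ := by
  have hdir : ∀ v, AEStronglyMeasurable (fun z ↦ fderiv 𝕜 (F · z) p₀ v) μ := by
    intro v
    refine aestronglyMeasurable_of_tendsto_ae atTop
      (f := fun n : ℕ ↦ fun z ↦ (n : 𝕜) • (F (p₀ + (n : 𝕜)⁻¹ • v) z - F p₀ z))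
      (fun n ↦ ((hF _).sub (hF p₀)).const_smul _) ?_
    filter_upwards [hdiff] with z hz
    exact hz.hasFDerivAt.lim v (by simpa using tendsto_natCast_atTop_atTop)
  let b := Module.finBasis 𝕜 E
  rw [funext fun z ↦ ContinuousLinearMap.eq_sum_smulRight_basis b (fderiv 𝕜 (F · z) p₀)]
  refine Finset.aestronglyMeasurable_fun_sum _ fun i _ ↦ ?_
  exact (ContinuousLinearMap.smulRightL 𝕜 E G _).continuous.comp_aestronglyMeasurable (hdir (b i))

theorem Complex.norm_fderiv_le_of_forall_mem_ball_norm_le [NormedSpace ℂ E] [NormedSpace ℂ G]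
    {f : E → G} {c : E} {R M : ℝ} (hR : 0 < R) (hf : DifferentiableOn ℂ f (ball c R))
    (hM : ∀ y ∈ ball c R, ‖f y‖ ≤ M) : ‖fderiv ℂ f c‖ ≤ 2 * M / R := by
  refine norm_fderiv_le_div_of_mapsTo_ball hf (fun y hy ↦ ?_) hR
  rw [mem_closedBall, dist_eq_norm]
  calc ‖f y - f c‖ ≤ ‖f y‖ + ‖f c‖ := norm_sub_le _ _
    _ ≤ 2 * M := by linarith [hM y hy, hM c (mem_ball_self hR)]

theorem Complex.differentiableOn_integral_of_locally_dominated [NormedSpace ℂ E]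
    [FiniteDimensional ℂ E] [NormedSpace ℂ G] {F : E → α → G} {U : Set E} (hU : IsOpen U)
    (hF_meas : ∀ p, AEStronglyMeasurable (F p) μ)
    (hF_diff : ∀ᵐ z ∂μ, DifferentiableOn ℂ (F · z) U)
    (hF_dom : ∀ p ∈ U, ∃ s ∈ 𝓝 p, ∃ bound : α → ℝ, Integrable bound μ ∧
      ∀ᵐ z ∂μ, ∀ q ∈ s, ‖F q z‖ ≤ bound z) :
    DifferentiableOn ℂ (fun p ↦ ∫ z, F p z ∂μ) U := by
  intro p hp
  obtain ⟨s, hs, bound, hbound, hFs⟩ := hF_dom p hp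
  obtain ⟨ε, hε, hεs⟩ := Metric.mem_nhds_iff.1 (inter_mem hs (hU.mem_nhds hp))
  have hball : ∀ q ∈ ball p (ε / 2), ball q (ε / 2) ⊆ s ∩ U := fun q hq ↦
    (ball_subset_ball' (by linarith [mem_ball.1 hq])).trans hεs
  refine (hasFDerivAt_integral_of_dominated_of_fderiv_le (F' := fun q z ↦ fderiv ℂ (F · z) q)
    (ball_mem_nhds p (half_pos hε)) (.of_forall hF_meas) ?_ ?_ ?_
    ((hbound.const_mul 2).div_const (ε / 2)) ?_).differentiableAt.differentiableWithinAt
  · refine hbound.mono' (hF_meas p) ?_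
    filter_upwards [hFs] with z hz
    exact hz p (hεs (mem_ball_self hε)).1
  · exact aestronglyMeasurable_fderiv_with_param hF_meas
      (hF_diff.mono fun z hz ↦ hz.differentiableAt (hU.mem_nhds hp))
  · filter_upwards [hF_diff, hFs] with z hdiff hbd q hq
    exact norm_fderiv_le_of_forall_mem_ball_norm_le (half_pos hε)
      (hdiff.mono fun y hy ↦ (hball q hq hy).2) fun y hy ↦ hbd y (hball q hq hy).1
  · filter_upwards [hF_diff] with z hdiff q hq
    exact (hdiff.differentiableAt
      (hU.mem_nhds (hball q hq (mem_ball_self (half_pos hε))).2)).hasFDerivAt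

end ParametricIntegral

section Weight

variable {ι : Type*} [Fintype ι]

theorem differentiableAt_prod_ofReal_cpow_two_mul (c : ι → ℝ) {a : ι → ℂ} (ha : ∀ i, a i ≠ 0) :
    DifferentiableAt ℂ (fun a : ι → ℂ ↦ ∏ i, (c i : ℂ) ^ (2 * a i)) a := by
  classical
  refine (HasFDerivAt.finsetProd fun i _ ↦ DifferentiableAt.hasFDerivAt ?_).differentiableAt
  exact (DifferentiableAt.const_mul (by fun_prop) 2).const_cpow
    (Or.inr (mul_ne_zero two_ne_zero (ha i)))

theorem norm_prod_ofReal_cpow_le {c C : ι → ℝ} {w : ι → ℂ} {t : ℝ} (hc : ∀ i, 0 ≤ c i)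
    (hcC : ∀ i, c i ≤ C i) (hw : ∀ i, 0 < (w i).re) (hwt : ∀ i, (w i).re ≤ t) :
    ‖∏ i, (c i : ℂ) ^ w i‖ ≤ ∏ i, max 1 (C i) ^ t := by
  rw [norm_prod]
  refine Finset.prod_le_prod (fun i _ ↦ norm_nonneg _) fun i _ ↦ ?_
  rw [Complex.norm_cpow_eq_rpow_re_of_nonneg (hc i) (hw i).ne']
  calc c i ^ (w i).re ≤ max 1 (C i) ^ (w i).re :=
        Real.rpow_le_rpow (hc i) ((hcC i).trans (le_max_right _ _)) (hw i).le
    _ ≤ max 1 (C i) ^ t := Real.rpow_le_rpow_of_exponent_le (le_max_left _ _) (hwt i)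

theorem IsCompact.exists_norm_prod_ofReal_norm_cpow_le {X : Type*} [TopologicalSpace X]
    {K : Set X} (hK : IsCompact K) {g : ι → X → ℂ} (hg : ∀ i, ContinuousOn (g i) K) (Δ : ℝ) :
    ∃ B, ∀ z ∈ K, ∀ a : ι → ℂ, (∀ i, 0 < (a i).re) → ‖a‖ ≤ Δ →
      ‖∏ i, ((‖g i z‖ : ℝ) : ℂ) ^ (2 * a i)‖ ≤ B := by
  choose C hC using fun i ↦ hK.exists_bound_of_continuousOn (hg i)
  refine ⟨∏ i, max 1 (C i) ^ (2 * Δ), fun z hz a ha haΔ ↦ ?_⟩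
  refine norm_prod_ofReal_cpow_le (fun _ ↦ norm_nonneg _) (fun i ↦ hC i z hz)
    (fun i ↦ by simpa using ha i) fun i ↦ ?_
  have := (Complex.re_le_norm (a i)).trans ((norm_le_pi_norm a i).trans haΔ)
  simp only [Complex.mul_re, Complex.re_ofNat, Complex.im_ofNat, zero_mul, sub_zero]
  linarith

end Weight

theorem stmt3_general (n r l : ℕ) (f : Fin r → MvPolynomial (Fin n) ℂ)
    (K : Set (Fin n → ℂ)) (hK : IsCompact K)
    (Z : Set (Fin n → ℂ)) (hZ : volume Z = 0)
    (ψ : (Fin n → ℂ) → (Fin l → ℂ) → ℂ)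
    (hmeas : Measurable fun p : (Fin n → ℂ) × (Fin l → ℂ) => ψ p.1 p.2)
    (hsupp : ∀ z ∉ K, ∀ x, ψ z x = 0)
    (hbdd : ∀ K' : Set (Fin l → ℂ), Bornology.IsBounded K' →
      ∃ M, ∀ z ∉ Z, ∀ x ∈ K', ‖ψ z x‖ ≤ M)
    (hhol : ∀ z ∉ Z, Differentiable ℂ (ψ z)) :
    DifferentiableOn ℂ
      (fun p : (Fin r → ℂ) × (Fin l → ℂ) =>
        ∫ z : Fin n → ℂ,
          (∏ i, ((‖MvPolynomial.eval z (f i)‖ : ℝ) : ℂ) ^ (2 * p.1 i)) * ψ z p.2)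
      {p : (Fin r → ℂ) × (Fin l → ℂ) | ∀ i, 0 < (p.1 i).re} := by
  have hU : IsOpen {p : (Fin r → ℂ) × (Fin l → ℂ) | ∀ i, 0 < (p.1 i).re} := by
    simpa only [Set.ofPred_forall] using
      isOpen_iInter_of_finite fun i ↦ isOpen_lt continuous_const (by fun_prop)
  have hZ_ae : ∀ᵐ z, z ∉ Z := measure_eq_zero_iff_ae_notMem.1 hZ
  have hpoly (i : Fin r) : Continuous fun z ↦ MvPolynomial.eval z (f i) :=
    MvPolynomial.continuous_eval _
  refine Complex.differentiableOn_integral_of_locally_dominated hU (fun p ↦ ?_) ?_ fun p hp ↦ ?_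
  · refine (Measurable.mul ?_ (hmeas.comp measurable_prodMk_right)).aestronglyMeasurable
    exact Finset.measurable_fun_prod _ fun i _ ↦
      (Complex.continuous_ofReal.comp (hpoly i).norm).measurable.pow_const _
  · filter_upwards [hZ_ae] with z hz p hp
    have hp0 (i : Fin r) : p.1 i ≠ 0 := fun h ↦ (hp i).ne' (by simp [h])
    exact (((differentiableAt_prod_ofReal_cpow_two_mul _ hp0).comp p differentiableAt_fst).mul
      ((hhol z hz).differentiableAt.comp p differentiableAt_snd)).differentiableWithinAt
  · set Δ := ‖p‖ + 1
    obtain ⟨M, hM⟩ := hbdd (ball 0 Δ) isBounded_ball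
    obtain ⟨B, hB⟩ := hK.exists_norm_prod_ofReal_norm_cpow_le (fun i ↦ (hpoly i).continuousOn) Δ
    refine ⟨{q | ∀ i, 0 < (q.1 i).re} ∩ ball 0 Δ,
      inter_mem (hU.mem_nhds hp) (isOpen_ball.mem_nhds (mem_ball_zero_iff.2 (lt_add_one _))),
      K.indicator fun _ ↦ B * M,
      (integrable_indicator_iff hK.measurableSet).2 (integrableOn_const hK.measure_lt_top.ne), ?_⟩
    filter_upwards [hZ_ae] with z hz q ⟨hqU, hqΔ⟩
    by_cases hzK : z ∈ K
    · have hq : ‖q‖ < Δ := mem_ball_zero_iff.1 hqΔ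
      have hweight := hB z hzK q.1 hqU ((norm_fst_le q).trans hq.le)
      rw [Set.indicator_of_mem hzK, norm_mul]
      exact mul_le_mul hweight (hM z hz q.2 (mem_ball_zero_iff.2 ((norm_snd_le q).trans_lt hq)))
        (norm_nonneg _) ((norm_nonneg _).trans hweight)
    · simp [hsupp z hzK, Set.indicator_of_notMem hzK]

/-- For suitable ψ (measurable, compactly supported in z, bounded on bounded x-sets,
    holomorphic in x with similarly bounded partials) and nonconstant polynomials
    f₁,…,f_r, the function L_ψ(a,x) = ∫ ∏|fᵢ(z)|^{2aᵢ} ψ(z,x) dz is holomorphic on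
    𝕌^r × ℂ^l, where 𝕌 = {Re > 0}. -/
theorem stmt3 (n r l : ℕ) (f : Fin r → MvPolynomial (Fin n) ℂ)
    (hf : ∀ i, 0 < (f i).totalDegree)
    (K : Set (Fin n → ℂ)) (hK : IsCompact K)
    (Z : Set (Fin n → ℂ)) (hZ : volume Z = 0)
    (ψ : (Fin n → ℂ) → (Fin l → ℂ) → ℂ)
    (hmeas : Measurable fun p : (Fin n → ℂ) × (Fin l → ℂ) => ψ p.1 p.2)
    (hsupp : ∀ z ∉ K, ∀ x, ψ z x = 0)
    (hbdd : ∀ K' : Set (Fin l → ℂ), Bornology.IsBounded K' →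
      ∃ M, ∀ z ∉ Z, ∀ x ∈ K', ‖ψ z x‖ ≤ M)
    (hhol : ∀ z ∉ Z, Differentiable ℂ (ψ z))
    (hdbdd : ∀ (k : Fin l) (K' : Set (Fin l → ℂ)), Bornology.IsBounded K' →
      ∃ M, ∀ z ∉ Z, ∀ x ∈ K', ‖fderiv ℂ (ψ z) x (Pi.single k 1)‖ ≤ M) :
    DifferentiableOn ℂ
      (fun p : (Fin r → ℂ) × (Fin l → ℂ) =>
        ∫ z : Fin n → ℂ,
          (∏ i, ((‖MvPolynomial.eval z (f i)‖ : ℝ) : ℂ) ^ (2 * p.1 i)) * ψ z p.2)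
      {p : (Fin r → ℂ) × (Fin l → ℂ) | ∀ i, 0 < (p.1 i).re} :=
  stmt3_general n r l f K hK Z hZ ψ hmeas hsupp hbdd hhol
end

section
/- Let p ∈ ℝ and a ∈ ℂ*. Then ∫₀^{2π} |a⁻¹λe^{iγ} + 1|^{p} · log|a⁻¹λe^{iγ} + 1| dγ = O(λ²) as λ → 0⁺. -/
/-!
Write `w = a⁻¹ λ e^{iγ}`. Since `log ‖1 + w‖ = Re (log (1 + w))` and `log (1 + w) = w + O(w²)`,
while `‖1 + w‖ ^ p = 1 + O(w)`, the integrand is `Re w + O(λ²)` uniformly in `γ`.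
The linear term `Re (a⁻¹ λ e^{iγ})` integrates to zero over a full period, leaving `O(λ²)`.
-/

open scoped Real Topology
open Asymptotics Complex

lemma log_norm_one_add_sub_re_isBigO :
    (fun w : ℂ => Real.log ‖1 + w‖ - w.re) =O[𝓝 0] fun w => ‖w‖ ^ 2 := by
  have hre : (fun w : ℂ => Real.log ‖1 + w‖ - w.re) =O[𝓝 0] fun w => log (1 + w) - w :=
    isBigO_of_le _ fun w => by simpa [log_re] using abs_re_le_norm (log (1 + w) - w)
  exact hre.trans (log_sub_self_isBigO.trans (isBigO_of_le _ fun w => by simp))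

lemma norm_one_add_rpow_sub_one_isBigO (p : ℝ) :
    (fun w : ℂ => ‖1 + w‖ ^ p - 1) =O[𝓝 0] fun w => ‖w‖ := by
  have hd : DifferentiableAt ℝ (fun w : ℂ => ‖1 + w‖ ^ p) 0 :=
    (((differentiableAt_const 1).add differentiableAt_id).norm ℝ (by simp)).rpow_const
      (Or.inl (by simp))
  simpa using isBigO_norm_right.mpr hd.isBigO_sub

lemma norm_one_add_rpow_mul_log_sub_re_isBigO (p : ℝ) :
    (fun w : ℂ => ‖1 + w‖ ^ p * Real.log ‖1 + w‖ - w.re) =O[𝓝 0] fun w => ‖w‖ ^ 2 := by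
  have hbdd : (fun w : ℂ => ‖1 + w‖ ^ p) =O[𝓝 0] fun _ => (1 : ℝ) :=
    Filter.Tendsto.isBigO_one ℝ (c := ‖1 + (0 : ℂ)‖ ^ p) <|
      (continuous_const.add continuous_id).norm.continuousAt.rpow_const (Or.inl (by simp))
  have hre : (fun w : ℂ => w.re) =O[𝓝 0] fun w => ‖w‖ :=
    isBigO_of_le _ fun w => by simpa using abs_re_le_norm w
  have hmain := (hbdd.mul log_norm_one_add_sub_re_isBigO).congr_right fun w => one_mul _
  have hcross := ((norm_one_add_rpow_sub_one_isBigO p).mul hre).congr_right fun w => (sq _).symm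
  exact (hmain.add hcross).congr_left fun w => by ring

lemma continuousAt_norm_one_add_rpow_mul_log (p : ℝ) {w : ℂ} (hw : 1 + w ≠ 0) :
    ContinuousAt (fun w : ℂ => ‖1 + w‖ ^ p * Real.log ‖1 + w‖) w := by
  have hw' : ‖1 + w‖ ≠ 0 := norm_ne_zero_iff.mpr hw
  exact ((continuousAt_const.add continuousAt_id).norm.rpow_const (Or.inl hw')).mul
    ((continuousAt_const.add continuousAt_id).norm.log hw')

lemma integral_re_mul_exp_mul_I (b : ℂ) :
    ∫ γ in (0 : ℝ)..2 * π, (b * exp (γ * I)).re = 0 := by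
  have hint : IntervalIntegrable (fun γ : ℝ => b * exp (γ * I)) MeasureTheory.volume 0 (2 * π) :=
    (by fun_prop : Continuous fun γ : ℝ => b * exp (γ * I)).intervalIntegrable _ _
  have hre := intervalIntegral.intervalIntegral_re hint
  simp only [RCLike.re_to_complex] at hre
  rw [hre, intervalIntegral.integral_const_mul]
  simp_rw [mul_comm _ I]
  rw [integral_exp_mul_complex I_ne_zero]
  simp [mul_comm I, exp_two_pi_mul_I]

lemma abs_integral_comp_mul_exp_mul_I_le {F : ℂ → ℝ} {M : ℝ} (b : ℂ)
    (hcont : ∀ w, ‖w‖ = ‖b‖ → ContinuousAt F w) (hF : ∀ w, ‖w‖ = ‖b‖ → |F w - w.re| ≤ M) :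
    |∫ γ in (0 : ℝ)..2 * π, F (b * exp (γ * I))| ≤ 2 * π * M := by
  have hnorm : ∀ γ : ℝ, ‖b * exp (γ * I)‖ = ‖b‖ := fun γ => by simp [norm_exp_ofReal_mul_I]
  have hw : Continuous fun γ : ℝ => b * exp (γ * I) := by fun_prop
  have hFint : IntervalIntegrable (fun γ : ℝ => F (b * exp (γ * I))) MeasureTheory.volume
      0 (2 * π) :=
    (continuous_iff_continuousAt.mpr fun γ => (hcont _ (hnorm γ)).comp
      (f := fun γ : ℝ => b * exp (γ * I)) hw.continuousAt).intervalIntegrable _ _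
  have hreint : IntervalIntegrable (fun γ : ℝ => (b * exp (γ * I)).re) MeasureTheory.volume
      0 (2 * π) :=
    (continuous_re.comp hw).intervalIntegrable _ _
  have hsub : ∫ γ in (0 : ℝ)..2 * π, F (b * exp (γ * I)) =
      ∫ γ in (0 : ℝ)..2 * π, (F (b * exp (γ * I)) - (b * exp (γ * I)).re) := by
    rw [intervalIntegral.integral_sub hFint hreint, integral_re_mul_exp_mul_I, sub_zero]
  rw [hsub, ← Real.norm_eq_abs]
  calc _ ≤ M * |2 * π - 0| :=
        intervalIntegral.norm_integral_le_of_norm_le_const fun γ _ => hF _ (hnorm γ)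
    _ = 2 * π * M := by rw [sub_zero, abs_of_pos Real.two_pi_pos, mul_comm]

/-- For p ∈ ℝ and a ∈ ℂ*,
    ∫₀^{2π} |a⁻¹λe^{iγ}+1|^p · log|a⁻¹λe^{iγ}+1| dγ = O(λ²) as λ → 0⁺. -/
theorem stmt16 (p : ℝ) (a : ℂ) (ha : a ≠ 0) :
    ∃ C > (0 : ℝ), ∃ ε > (0 : ℝ), ∀ lam ∈ Set.Ioo (0 : ℝ) ε,
      |∫ γ in (0 : ℝ)..(2 * π),
          ‖a⁻¹ * (lam : ℂ) * Complex.exp (γ * Complex.I) + 1‖ ^ p *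
            Real.log ‖a⁻¹ * (lam : ℂ) * Complex.exp (γ * Complex.I) + 1‖|
        ≤ C * lam ^ 2 := by
  set F : ℂ → ℝ := fun w => ‖1 + w‖ ^ p * Real.log ‖1 + w‖
  obtain ⟨c, hc, hbound⟩ := (norm_one_add_rpow_mul_log_sub_re_isBigO p).exists_pos
  have hcont : ∀ᶠ w in 𝓝 (0 : ℂ), ContinuousAt F w :=
    ((continuous_const.add continuous_id).continuousAt.eventually_ne (by simp)).mono
      fun w hw => continuousAt_norm_one_add_rpow_mul_log p hw
  obtain ⟨R, hR, hnear⟩ := Metric.eventually_nhds_iff.mp (hbound.bound.and hcont)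
  have hsmall : ∀ w : ℂ, ‖w‖ < R → |F w - w.re| ≤ c * ‖w‖ ^ 2 ∧ ContinuousAt F w := fun w hw => by
    simpa only [Real.norm_eq_abs, norm_pow, abs_norm] using hnear (by simpa using hw)
  have hr : 0 < ‖a⁻¹‖ := norm_pos_iff.mpr (inv_ne_zero ha)
  refine ⟨2 * π * c * ‖a⁻¹‖ ^ 2, by positivity, R / ‖a⁻¹‖, by positivity, ?_⟩
  rintro lam ⟨hlam, hlamR⟩
  have hb : ‖a⁻¹ * (lam : ℂ)‖ = ‖a⁻¹‖ * lam := by simp [abs_of_pos hlam]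
  have hbR : ‖a⁻¹ * (lam : ℂ)‖ < R := by rwa [hb, ← lt_div_iff₀' hr]
  simp_rw [add_comm _ (1 : ℂ)]
  calc _ ≤ 2 * π * (c * ‖a⁻¹ * (lam : ℂ)‖ ^ 2) :=
        abs_integral_comp_mul_exp_mul_I_le (F := F) _
          (fun w hw => (hsmall w (hw ▸ hbR)).2) (fun w hw => hw ▸ (hsmall w (hw ▸ hbR)).1)
    _ = _ := by rw [hb]; ring
end
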